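/- The bias of the doubly robust estimator equals (1/|D|) |Σ_{(u,i)∈D} Δ_{u,i} δ_{u,i}|, where Δ_{u,i} = (p_{u,i} − p̂_{u,i})/p̂_{u,i} and δ_{u,i} = e_{u,i} − ê_{u,i}. That is, |E_O[E^DR] − P| = (1/|D|) |Σ_{(u,i)∈D} Δ_{u,i} δ_{u,i}|. -/

import Mathlib

/-!
Under independent Bernoulli indicators the expectation is linear with `E[o_d] = p_d`, so the
expected estimator is `(1/|D|) Σ (ê_d + p_d δ_d / p̂_d)`, and `ê_d + p_d δ_d / p̂_d - e_d = Δ_d δ_d`.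
-/

open Finset

/-- Expectation over independent Bernoulli observation indicators. -/
noncomputable def expVal {D : Type*} [Fintype D] [DecidableEq D] (p : D → ℝ) (f : (D → Bool) → ℝ) : ℝ :=
  ∑ o : D → Bool, (∏ d, if o d then p d else 1 - p d) * f o

theorem Fintype.sum_prod_mul_eval_of_sum_eq_one {ι κ R : Type*} [Fintype ι] [DecidableEq ι]
    [Fintype κ] [CommSemiring R] (w : ι → κ → R) (hw : ∀ j, ∑ k, w j k = 1) (i : ι)
    (g : κ → R) :
    ∑ x : ι → κ, (∏ j, w j (x j)) * g (x i) = ∑ k, w i k * g k := by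
  calc ∑ x : ι → κ, (∏ j, w j (x j)) * g (x i)
      = ∑ x : ι → κ, ∏ j, w j (x j) * (if j = i then g (x j) else 1) := by
        simp only [prod_mul_distrib, prod_ite_eq']
    _ = ∏ j, ∑ k, w j k * (if j = i then g k else 1) := by rw [Fintype.prod_sum]
    _ = ∏ j, if j = i then ∑ k, w i k * g k else 1 := by
        refine Finset.prod_congr rfl fun j _ => ?_
        split_ifs with hj
        · rw [hj]
        · simpa using hw j
    _ = ∑ k, w i k * g k := by simp

section expVal

variable {D : Type*} [Fintype D] [DecidableEq D] (p : D → ℝ)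

theorem expVal_const_mul (c : ℝ) (f : (D → Bool) → ℝ) :
    expVal p (fun o => c * f o) = c * expVal p f := by
  simp only [expVal, mul_sum]
  exact sum_congr rfl fun _ _ => mul_left_comm _ _ _

theorem expVal_sum {ι : Type*} (s : Finset ι) (f : ι → (D → Bool) → ℝ) :
    expVal p (fun o => ∑ i ∈ s, f i o) = ∑ i ∈ s, expVal p (f i) := by
  simp only [expVal, mul_sum]
  exact sum_comm

theorem expVal_comp_eval (d : D) (g : Bool → ℝ) :
    expVal p (fun o => g (o d)) = p d * g true + (1 - p d) * g false := by
  simpa [expVal] using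
    Fintype.sum_prod_mul_eval_of_sum_eq_one (fun d b => if b then p d else 1 - p d)
      (fun d => by simp) d g

end expVal

theorem dr_bias_general {D : Type*} [Fintype D] [DecidableEq D]
    (e ehat p phat : D → ℝ)
    (hphat : ∀ d, 0 < phat d) :
    |expVal p (fun o => (Fintype.card D : ℝ)⁻¹ *
        ∑ d, (ehat d + (if o d then (1 : ℝ) else 0) * (e d - ehat d) / phat d))
      - (Fintype.card D : ℝ)⁻¹ * ∑ d, e d|
    = (Fintype.card D : ℝ)⁻¹ *
        |∑ d, ((p d - phat d) / phat d) * (e d - ehat d)| := by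
  have hmean : ∀ d,
      expVal p (fun o => ehat d + (if o d then (1 : ℝ) else 0) * (e d - ehat d) / phat d)
        = ehat d + p d * (e d - ehat d) / phat d := fun d => by
    rw [expVal_comp_eval p d fun b => ehat d + (if b then (1 : ℝ) else 0) * (e d - ehat d) / phat d]
    simp only [if_true, Bool.false_eq_true, if_false]
    ring
  have hterm : ∀ d, ehat d + p d * (e d - ehat d) / phat d - e d
      = (p d - phat d) / phat d * (e d - ehat d) := fun d => by
    field_simp [(hphat d).ne']
    ring
  rw [expVal_const_mul, expVal_sum, sum_congr rfl fun d _ => hmean d, ← mul_sub,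
    ← sum_sub_distrib, sum_congr rfl fun d _ => hterm d, abs_mul, abs_of_nonneg (by positivity)]

/-- The bias of the doubly robust estimator equals `(1/|D|)|Σ Δ δ|`. -/
theorem dr_bias {D : Type*} [Fintype D] [DecidableEq D] [Nonempty D]
    (e ehat p phat : D → ℝ)
    (hp : ∀ d, 0 < p d ∧ p d ≤ 1) (hphat : ∀ d, 0 < phat d) :
    |expVal p (fun o => (Fintype.card D : ℝ)⁻¹ *
        ∑ d, (ehat d + (if o d then (1 : ℝ) else 0) * (e d - ehat d) / phat d))
      - (Fintype.card D : ℝ)⁻¹ * ∑ d, e d|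
    = (Fintype.card D : ℝ)⁻¹ *
        |∑ d, ((p d - phat d) / phat d) * (e d - ehat d)| :=
  dr_bias_general e ehat p phat hphat
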